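/- arXiv:1012.5458 — 2 statements merged into one kernel-verified Lean document; each statement's English description precedes it below -/
import Mathlib

section
/- For d ≥ 2 and s ≥ 0, the weight u(x) = |x'|^s on ℝ^d (where x = (x',x_d) ∈ ℝ^{d-1}×ℝ) belongs to the Muckenhoupt class A_p(ℝ^d) if and only if s < (p-1)(d-1). -/
open MeasureTheory Metric

/-- Points of ℝ^d written as `(x', x_d) ∈ ℝ^{d-1} × ℝ`. -/
abbrev Pt (d : ℕ) := EuclideanSpace ℝ (Fin (d - 1)) × ℝ

/-- The A_p ratio of a weight `u` over the ball of center `z` and radius `r`. -/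
noncomputable def apRatio {d : ℕ} (p : ℝ) (u : Pt d → ℝ) (z : Pt d) (r : ℝ) : ℝ :=
  (⨍ x in ball z r, u x) * (⨍ x in ball z r, (u x) ^ (-(1 / (p - 1)))) ^ (p - 1)

/-- Membership in the Muckenhoupt class `A_p(ℝ^d)`: a locally integrable weight whose
A_p ratios over all balls are uniformly bounded. -/
def MemAp {d : ℕ} (p : ℝ) (u : Pt d → ℝ) : Prop :=
  LocallyIntegrable u volume ∧ ∃ C : ℝ, ∀ z r, 0 < r → apRatio p u z r ≤ C


/-!
Balls of `ℝ^{d-1} × ℝ` (with the sup norm of the product) are products of balls, so every A_p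
ratio of `u` is the A_p ratio of `v(y) = ‖y‖ ^ s` on `ℝ^m`, `m = d - 1`, over the projected ball.
The dual weight is `‖y‖ ^ (-β)` with `β = s / (p - 1)`.

If `β < m`, polar coordinates give `∫_{B(0,R)} ‖y‖ ^ (-β) = C R ^ (m - β)`; a ball `B(w, r)` with
`‖w‖ < 2r` lies in `B(0, 3r)`, which bounds its ratio, while on a ball with `‖w‖ ≥ 2r` both weights
are within a factor `3 ^ s` of constants.

If `β ≥ m`, the dual weight has infinite integral over `B(e, 1)`, `‖e‖ = 1`: it is at least a fixed
constant on each of the disjoint balls `B(4⁻ᵏ e, 4⁻ᵏ / 2)`. Its averages over the balls `B(e, ρ)`,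
`ρ < 1`, on which it is bounded, are therefore finite but unbounded, whereas the averages of `v`
over them stay bounded below.
-/

open Set Filter
open scoped ENNReal

section Average

variable {α : Type*} [MeasurableSpace α] {μ : Measure α} {s : Set α} {f : α → ℝ} {C : ℝ}

lemma setAverage_nonneg_of_nonneg (hs : MeasurableSet s) (hf : ∀ x ∈ s, 0 ≤ f x) :
    0 ≤ ⨍ x in s, f x ∂μ := by
  rw [setAverage_eq]
  exact smul_nonneg (inv_nonneg.2 measureReal_nonneg) (setIntegral_nonneg hs hf)

lemma setAverage_le_of_forall_le (hs : μ s ≠ ∞) (hf₀ : ∀ x ∈ s, 0 ≤ f x)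
    (hfC : ∀ x ∈ s, f x ≤ C) (hC : 0 ≤ C) : ⨍ x in s, f x ∂μ ≤ C := by
  have hint : ∫ x in s, f x ∂μ ≤ C * μ.real s :=
    (le_abs_self _).trans <| norm_setIntegral_le_of_norm_le_const hs.lt_top fun x hx => by
      rw [Real.norm_of_nonneg (hf₀ x hx)]
      exact hfC x hx
  rw [setAverage_eq, smul_eq_mul]
  rcases (measureReal_nonneg (μ := μ) (s := s)).eq_or_lt with h₀ | hpos
  · rwa [← h₀, inv_zero, zero_mul]
  · rwa [inv_mul_le_iff₀ hpos, mul_comm]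

lemma le_setAverage_of_mul_le_setIntegral {V : ℝ} (hs : 0 < μ.real s) (hsV : μ.real s ≤ V)
    (hC : 0 ≤ C) (h : C * V ≤ ∫ x in s, f x ∂μ) : C ≤ ⨍ x in s, f x ∂μ := by
  rw [setAverage_eq, smul_eq_mul, le_inv_mul_iff₀ hs, mul_comm]
  exact (mul_le_mul_of_nonneg_left hsV hC).trans h

end Average

lemma setAverage_prod_comp_fst {α β F : Type*} [MeasurableSpace α] [MeasurableSpace β]
    [NormedAddCommGroup F] [NormedSpace ℝ F] {μ : Measure α} {ν : Measure β} [SFinite μ]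
    [SFinite ν] (g : α → F) (s : Set α) {t : Set β} (ht₀ : ν t ≠ 0) (ht : ν t ≠ ∞) :
    ⨍ z in s ×ˢ t, g z.1 ∂μ.prod ν = ⨍ x in s, g x ∂μ := by
  have ht' : 0 < ν.real t := ENNReal.toReal_pos ht₀ ht
  rw [setAverage_eq, setAverage_eq, ← Measure.prod_restrict, integral_fun_fst,
    measureReal_restrict_apply_univ, measureReal_def, Measure.prod_prod, ENNReal.toReal_mul,
    smul_smul, ← measureReal_def, ← measureReal_def, mul_inv, mul_assoc, inv_mul_cancel₀ ht'.ne',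
    mul_one]

noncomputable def ballApRatio {E : Type*} [PseudoMetricSpace E] [MeasurableSpace E]
    (μ : Measure E) (p : ℝ) (u : E → ℝ) (z : E) (r : ℝ) : ℝ :=
  (⨍ x in ball z r, u x ∂μ) * (⨍ x in ball z r, u x ^ (-(1 / (p - 1))) ∂μ) ^ (p - 1)

lemma apRatio_comp_fst {d : ℕ} (p : ℝ) (v : EuclideanSpace ℝ (Fin (d - 1)) → ℝ) (z : Pt d)
    {r : ℝ} (hr : 0 < r) : apRatio p (fun x => v x.1) z r = ballApRatio volume p v z.1 r := by
  have h₀ : volume (ball z.2 r) ≠ 0 := (measure_ball_pos _ _ hr).ne'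
  rw [apRatio, ballApRatio, ← ball_prod_same, Measure.volume_eq_prod,
    setAverage_prod_comp_fst _ _ h₀ measure_ball_lt_top.ne,
    setAverage_prod_comp_fst (fun y => v y ^ (-(1 / (p - 1)))) _ h₀ measure_ball_lt_top.ne]

lemma ballApRatio_norm_rpow {E : Type*} [SeminormedAddCommGroup E] [MeasurableSpace E]
    (μ : Measure E) (p s : ℝ) (z : E) (r : ℝ) :
    ballApRatio μ p (fun x => ‖x‖ ^ s) z r =
      (⨍ x in ball z r, ‖x‖ ^ s ∂μ) * (⨍ x in ball z r, ‖x‖ ^ (-(s / (p - 1))) ∂μ) ^ (p - 1) := by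
  have hσ (x : E) : (‖x‖ ^ s) ^ (-(1 / (p - 1))) = ‖x‖ ^ (-(s / (p - 1))) := by
    rw [← Real.rpow_mul (norm_nonneg x)]
    congr 1
    field_simp
  simp only [ballApRatio, hσ]

lemma measureReal_ball_pos {X : Type*} [PseudoMetricSpace X] [ProperSpace X] [MeasurableSpace X]
    (μ : Measure X) [μ.IsOpenPosMeasure] [IsFiniteMeasureOnCompacts μ] (x : X) {r : ℝ}
    (hr : 0 < r) : 0 < μ.real (ball x r) :=
  ENNReal.toReal_pos (measure_ball_pos μ x hr).ne' measure_ball_lt_top.ne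

lemma pow_pred_mul_rpow {n : ℕ} (hn : n ≠ 0) {y : ℝ} (hy : 0 < y) (γ : ℝ) :
    y ^ (n - 1) * y ^ γ = y ^ ((n : ℝ) - 1 + γ) := by
  rw [Real.rpow_add hy, ← Real.rpow_natCast, Nat.cast_sub (Nat.one_le_iff_ne_zero.2 hn),
    Nat.cast_one]

lemma mul_rpow_le_of_le_rpow {p s a b ρ K : ℝ} (hp : 1 < p) (hρ : 0 < ρ) (ha : a ≤ ρ ^ s)
    (hb₀ : 0 ≤ b) (hb : b ≤ K * ρ ^ (-(s / (p - 1)))) : a * b ^ (p - 1) ≤ K ^ (p - 1) := by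
  have hp₁ : 0 < p - 1 := by linarith
  have hK : 0 ≤ K := nonneg_of_mul_nonneg_left (hb₀.trans hb) (Real.rpow_pos_of_pos hρ _)
  calc a * b ^ (p - 1) ≤ ρ ^ s * (K * ρ ^ (-(s / (p - 1)))) ^ (p - 1) :=
        mul_le_mul ha (Real.rpow_le_rpow hb₀ hb hp₁.le) (by positivity) (by positivity)
    _ = K ^ (p - 1) := by
        rw [Real.mul_rpow hK (by positivity), ← Real.rpow_mul hρ.le, neg_mul,
          div_mul_cancel₀ s hp₁.ne', Real.rpow_neg hρ.le]
        field_simp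

lemma exists_lt_setLIntegral_ball_of_eq_top {X : Type*} [PseudoMetricSpace X] [MeasurableSpace X]
    [OpensMeasurableSpace X] (μ : Measure X) (f : X → ℝ≥0∞) {x : X} {r₀ R : ℝ} (hr₀ : r₀ < R)
    (hf : ∫⁻ y in ball x R, f y ∂μ = ∞) {M : ℝ≥0∞} (hM : M ≠ ∞) :
    ∃ ρ, r₀ ≤ ρ ∧ ρ < R ∧ M < ∫⁻ y in ball x ρ, f y ∂μ := by
  have hR₀ : 0 < R - r₀ := sub_pos.2 hr₀
  set ρ : ℕ → ℝ := fun n => R - (R - r₀) / (n + 1)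
  have hρ_mono : Monotone fun n => ball x (ρ n) := fun m n hmn =>
    ball_subset_ball (by simp only [ρ]; gcongr)
  have hρ_lt (n : ℕ) : ρ n < R := by
    simp only [ρ]
    linarith [div_pos hR₀ n.cast_add_one_pos]
  have hunion : ⋃ n, ball x (ρ n) = ball x R := by
    refine (iUnion_subset fun n => ball_subset_ball (hρ_lt n).le).antisymm fun y hy => ?_
    have hgap : 0 < R - dist y x := sub_pos.2 (mem_ball.1 hy)
    obtain ⟨n, hn⟩ := exists_nat_gt ((R - r₀) / (R - dist y x))
    have : (R - r₀) / (n + 1) < R - dist y x := by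
      rw [div_lt_iff₀ n.cast_add_one_pos]
      rw [div_lt_iff₀ hgap] at hn
      linarith
    exact mem_iUnion.2 ⟨n, mem_ball.2 (by simp only [ρ]; linarith)⟩
  have hsup : ⨆ n, μ.withDensity f (ball x (ρ n)) = ∞ := by
    rw [← hρ_mono.measure_iUnion, hunion, withDensity_apply _ measurableSet_ball, hf]
  obtain ⟨n, hn⟩ := lt_iSup_iff.1 (hsup ▸ hM.lt_top)
  refine ⟨ρ n, ?_, hρ_lt n, by rwa [withDensity_apply _ measurableSet_ball] at hn⟩
  have : (R - r₀) / (n + 1) ≤ R - r₀ :=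
    div_le_self hR₀.le (by linarith [(n.cast_nonneg : (0 : ℝ) ≤ n)])
  simp only [ρ]
  linarith

section NormRpow

open Module Function

variable {E : Type*} [NormedAddCommGroup E] [NormedSpace ℝ E] [FiniteDimensional ℝ E]
  [MeasurableSpace E] [BorelSpace E] (μ : Measure E) [μ.IsAddHaarMeasure]

lemma integrableOn_norm_rpow_ball_of_lt_norm {w : E} {r : ℝ} (hr : r < ‖w‖) (γ : ℝ) :
    IntegrableOn (fun x : E => ‖x‖ ^ γ) (ball w r) μ := by
  have hcont : ContinuousOn (fun x : E => ‖x‖ ^ γ) (closedBall w r) := fun x hx =>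
    (continuous_norm.continuousAt.rpow_const (Or.inl (by
      linarith [norm_le_of_mem_closedBall (mem_closedBall_comm.1 hx)]))).continuousWithinAt
  exact (hcont.integrableOn_compact (isCompact_closedBall w r)).mono_set ball_subset_closedBall

lemma ballApRatio_norm_rpow_le_of_two_mul_le_norm {p s : ℝ} (hp : 1 < p) (hs : 0 ≤ s) {w : E}
    {r : ℝ} (hr : 0 < r) (hfar : 2 * r ≤ ‖w‖) :
    ballApRatio μ p (fun x => ‖x‖ ^ s) w r ≤ 3 ^ s := by
  have hw : 0 < ‖w‖ := by linarith
  have hβ : 0 ≤ s / (p - 1) := div_nonneg hs (by linarith)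
  have hnorm (x : E) (hx : x ∈ ball w r) : ‖w‖ / 2 ≤ ‖x‖ ∧ ‖x‖ ≤ 3 / 2 * ‖w‖ :=
    ⟨by linarith [norm_lt_of_mem_ball (mem_ball_comm.1 hx)],
      by linarith [norm_lt_of_mem_ball hx]⟩
  rw [ballApRatio_norm_rpow]
  refine (mul_rpow_le_of_le_rpow (K := 3 ^ (s / (p - 1))) (s := s) hp (ρ := 3 / 2 * ‖w‖)
    (by positivity) ?_ ?_ ?_).trans_eq ?_
  · exact setAverage_le_of_forall_le measure_ball_lt_top.ne (fun x _ => by positivity)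
      (fun x hx => Real.rpow_le_rpow (norm_nonneg x) (hnorm x hx).2 hs) (by positivity)
  · exact setAverage_nonneg_of_nonneg measurableSet_ball fun x _ => by positivity
  · refine setAverage_le_of_forall_le measure_ball_lt_top.ne (fun x _ => by positivity)
      (fun x hx => ?_) (by positivity)
    calc ‖x‖ ^ (-(s / (p - 1))) ≤ (‖w‖ / 2) ^ (-(s / (p - 1))) :=
          Real.rpow_le_rpow_of_nonpos (by positivity) (hnorm x hx).1 (neg_nonpos.2 hβ)
      _ = 3 ^ (s / (p - 1)) * (3 / 2 * ‖w‖) ^ (-(s / (p - 1))) := by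
          rw [show 3 / 2 * ‖w‖ = 3 * (‖w‖ / 2) by ring, Real.mul_rpow (by norm_num) (by positivity),
            Real.rpow_neg (by norm_num : (0 : ℝ) ≤ 3), mul_inv_cancel_left₀ (by positivity)]
  · rw [← Real.rpow_mul (by norm_num), div_mul_cancel₀ s (by linarith)]

variable [Nontrivial E]

lemma addHaar_real_ball (x : E) {r : ℝ} (hr : 0 ≤ r) :
    μ.real (ball x r) = r ^ finrank ℝ E * μ.real (ball 0 1) := by
  rw [← Measure.addHaar_real_closedBall_eq_addHaar_real_ball,
    Measure.addHaar_real_closedBall μ x hr]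

lemma integrableOn_norm_rpow_ball_zero {γ : ℝ} (hγ : -(finrank ℝ E : ℝ) < γ) (R : ℝ) :
    IntegrableOn (fun x : E => ‖x‖ ^ γ) (ball 0 R) μ := by
  rw [integrableOn_fun_norm_addHaar μ (f := fun t => t ^ γ)]
  rcases le_or_gt R 0 with hR | hR
  · simp [Ioo_eq_empty_of_le hR]
  · refine ((intervalIntegral.integrableOn_Ioo_rpow_iff hR).2
      (by linarith : -1 < (finrank ℝ E : ℝ) - 1 + γ)).congr_fun
      (fun y hy => (pow_pred_mul_rpow finrank_pos.ne' hy.1 γ).symm) measurableSet_Ioo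

lemma setIntegral_norm_rpow_ball_zero {γ : ℝ} (hγ : -(finrank ℝ E : ℝ) < γ) {R : ℝ} (hR : 0 ≤ R) :
    ∫ x in ball (0 : E) R, ‖x‖ ^ γ ∂μ =
      finrank ℝ E / (finrank ℝ E + γ) * μ.real (ball 0 1) * R ^ ((finrank ℝ E : ℝ) + γ) := by
  have hind : (ball (0 : E) R).indicator (fun x => ‖x‖ ^ γ) =
      fun x => (Iio R).indicator (fun t => t ^ γ) ‖x‖ := by
    ext x
    simp only [indicator, mem_ball_zero_iff, mem_Iio]
  have hradial : ∫ y in Ioi (0 : ℝ), y ^ (finrank ℝ E - 1) • (Iio R).indicator (· ^ γ) y =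
      R ^ ((finrank ℝ E : ℝ) + γ) / (finrank ℝ E + γ) := by
    rw [← indicator_smul (Iio R) (fun y : ℝ => y ^ (finrank ℝ E - 1)) (fun t => t ^ γ)]
    simp only [smul_eq_mul]
    rw [setIntegral_indicator measurableSet_Iio, Ioi_inter_Iio,
      setIntegral_congr_fun measurableSet_Ioo fun y hy => pow_pred_mul_rpow finrank_pos.ne' hy.1 γ,
      ← integral_Ioc_eq_integral_Ioo, ← intervalIntegral.integral_of_le hR,
      integral_rpow (Or.inl (by linarith)), Real.zero_rpow (by linarith)]
    ring_nf
  rw [← integral_indicator measurableSet_ball, hind, integral_fun_norm_addHaar, hradial,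
    nsmul_eq_mul, smul_eq_mul]
  field_simp

lemma ballApRatio_norm_rpow_le_of_norm_lt_two_mul {p s : ℝ} (hp : 1 < p) (hs : 0 ≤ s)
    (hsp : s < (p - 1) * finrank ℝ E) {w : E} {r : ℝ} (hr : 0 < r) (hnear : ‖w‖ < 2 * r) :
    ballApRatio μ p (fun x => ‖x‖ ^ s) w r ≤
      (3 ^ finrank ℝ E * (finrank ℝ E / (finrank ℝ E - s / (p - 1)))) ^ (p - 1) := by
  rw [ballApRatio_norm_rpow]
  have hp₁ : 0 < p - 1 := by linarith
  have hβ : s / (p - 1) < finrank ℝ E := (div_lt_iff₀ hp₁).2 (by linarith)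
  have hsub : ball w r ⊆ ball (0 : E) (3 * r) := fun x hx =>
    mem_ball_zero_iff.2 (by linarith [norm_lt_of_mem_ball hx])
  have hv := measureReal_ball_pos μ (0 : E) one_pos
  refine mul_rpow_le_of_le_rpow (s := s) hp (ρ := 3 * r) (by positivity) ?_ ?_ ?_
  · exact setAverage_le_of_forall_le measure_ball_lt_top.ne (fun x _ => by positivity)
      (fun x hx => Real.rpow_le_rpow (norm_nonneg x) (mem_ball_zero_iff.1 (hsub hx)).le hs)
      (by positivity)
  · exact setAverage_nonneg_of_nonneg measurableSet_ball fun x _ => by positivity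
  · have hint : ∫ x in ball w r, ‖x‖ ^ (-(s / (p - 1))) ∂μ ≤
        ∫ x in ball (0 : E) (3 * r), ‖x‖ ^ (-(s / (p - 1))) ∂μ :=
      setIntegral_mono_set (integrableOn_norm_rpow_ball_zero μ (by linarith) _)
        (.of_forall fun x => by positivity) hsub.eventuallyLE
    rw [setAverage_eq, smul_eq_mul, addHaar_real_ball μ w hr.le, inv_mul_le_iff₀ (by positivity)]
    refine hint.trans_eq ?_
    rw [setIntegral_norm_rpow_ball_zero μ (by linarith) (by positivity),
      Real.rpow_add (by positivity), Real.rpow_natCast, mul_pow, ← sub_eq_add_neg]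
    field_simp

lemma exists_ballApRatio_norm_rpow_le {p s : ℝ} (hp : 1 < p) (hs : 0 ≤ s)
    (hsp : s < (p - 1) * finrank ℝ E) :
    ∃ C, ∀ (w : E) (r : ℝ), 0 < r → ballApRatio μ p (fun x => ‖x‖ ^ s) w r ≤ C := by
  refine ⟨max (3 ^ s) ((3 ^ finrank ℝ E * (finrank ℝ E / (finrank ℝ E - s / (p - 1)))) ^ (p - 1)),
    fun w r hr => ?_⟩
  rcases le_or_gt (2 * r) ‖w‖ with hfar | hnear
  · exact (ballApRatio_norm_rpow_le_of_two_mul_le_norm μ hp hs hr hfar).trans (le_max_left _ _)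
  · exact (ballApRatio_norm_rpow_le_of_norm_lt_two_mul μ hp hs hsp hr hnear).trans
      (le_max_right _ _)

lemma le_lintegral_norm_rpow_ball_half_norm {c : E} (hc₀ : c ≠ 0) (hc₁ : ‖c‖ ≤ 1) {γ : ℝ}
    (hγ : γ ≤ -(finrank ℝ E : ℝ)) :
    ENNReal.ofReal (2 ^ γ / 2 ^ finrank ℝ E) * μ (ball 0 1) ≤
      ∫⁻ x in ball c (‖c‖ / 2), ENNReal.ofReal (‖x‖ ^ γ) ∂μ := by
  set δ := ‖c‖
  have hδ : 0 < δ := norm_pos_iff.2 hc₀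
  have hpt (x : E) (hx : x ∈ ball c (δ / 2)) :
      ENNReal.ofReal ((2 * δ) ^ γ) ≤ ENNReal.ofReal (‖x‖ ^ γ) :=
    ENNReal.ofReal_le_ofReal <| Real.rpow_le_rpow_of_nonpos
      (by linarith [norm_lt_of_mem_ball (mem_ball_comm.1 hx)])
      (by linarith [norm_lt_of_mem_ball hx]) (hγ.trans (by simp))
  refine le_trans ?_ (setLIntegral_mono' measurableSet_ball hpt)
  rw [setLIntegral_const, Measure.addHaar_ball μ c (r := δ / 2) (by positivity), ← mul_assoc,
    ← ENNReal.ofReal_mul (by positivity)]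
  refine mul_le_mul_left (ENNReal.ofReal_le_ofReal ?_) _
  have hδγ : δ ^ (-(finrank ℝ E : ℝ)) ≤ δ ^ γ := Real.rpow_le_rpow_of_exponent_ge hδ hc₁ hγ
  calc 2 ^ γ / 2 ^ finrank ℝ E = 2 ^ γ * (δ ^ (-(finrank ℝ E : ℝ)) * δ ^ finrank ℝ E) /
        2 ^ finrank ℝ E := by
        rw [Real.rpow_neg hδ.le, Real.rpow_natCast, inv_mul_cancel₀ (by positivity), mul_one]
    _ ≤ 2 ^ γ * (δ ^ γ * δ ^ finrank ℝ E) / 2 ^ finrank ℝ E := by gcongr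
    _ = (2 * δ) ^ γ * (δ / 2) ^ finrank ℝ E := by
        rw [Real.mul_rpow (by norm_num) hδ.le, div_pow]
        ring

lemma lintegral_norm_rpow_ball_eq_top {e : E} (he : ‖e‖ = 1) {γ : ℝ}
    (hγ : γ ≤ -(finrank ℝ E : ℝ)) : ∫⁻ x in ball e 1, ENNReal.ofReal (‖x‖ ^ γ) ∂μ = ∞ := by
  set c : ℕ → E := fun k => (4⁻¹ : ℝ) ^ k • e
  have hc (k : ℕ) : ‖c k‖ = 4⁻¹ ^ k := by
    rw [norm_smul, he, mul_one, Real.norm_of_nonneg (by positivity)]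
  have hc₁ (k : ℕ) : ‖c k‖ ≤ 1 := hc k ▸ pow_le_one₀ (by norm_num) (by norm_num)
  have hc₀ (k : ℕ) : c k ≠ 0 := norm_pos_iff.1 (hc k ▸ by positivity)
  set S : ℕ → Set E := fun k => ball (c k) (‖c k‖ / 2)
  have hS_sub (k : ℕ) : S k ⊆ ball e 1 := fun x hx => by
    have hce : ‖c k - e‖ = 1 - ‖c k‖ := by
      rw [hc, show c k - e = ((4⁻¹ : ℝ) ^ k - 1) • e by rw [sub_smul, one_smul], norm_smul, he,
        mul_one, Real.norm_of_nonpos (by linarith [hc k ▸ hc₁ k])]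
      ring
    rw [mem_ball_iff_norm] at hx ⊢
    linarith [norm_sub_le_norm_sub_add_norm_sub x (c k) e, norm_nonneg (c k)]
  have hS_disj : Pairwise (Disjoint on S) := by
    refine (pairwise_disjoint_on S).2 fun j k hjk => Set.disjoint_left.2 fun x hxj hxk => ?_
    have hjk' : ‖c k‖ ≤ ‖c j‖ / 4 := by
      rw [hc, hc, div_eq_mul_inv, ← pow_succ]
      exact pow_le_pow_of_le_one (by norm_num) (by norm_num) hjk
    linarith [norm_lt_of_mem_ball (mem_ball_comm.1 hxj), norm_lt_of_mem_ball hxk,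
      norm_pos_iff.2 (hc₀ j)]
  have hpos : ENNReal.ofReal (2 ^ γ / 2 ^ finrank ℝ E) * μ (ball 0 1) ≠ 0 :=
    mul_ne_zero (by simp; positivity) (measure_ball_pos μ 0 one_pos).ne'
  refine top_le_iff.1 ?_
  calc ∞ = ∑' _ : ℕ, ENNReal.ofReal (2 ^ γ / 2 ^ finrank ℝ E) * μ (ball 0 1) :=
        (ENNReal.tsum_const_eq_top_of_ne_zero hpos).symm
    _ ≤ ∑' k, ∫⁻ x in S k, ENNReal.ofReal (‖x‖ ^ γ) ∂μ :=
        ENNReal.tsum_le_tsum fun k => le_lintegral_norm_rpow_ball_half_norm μ (hc₀ k) (hc₁ k) hγ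
    _ = ∫⁻ x in ⋃ k, S k, ENNReal.ofReal (‖x‖ ^ γ) ∂μ :=
        (lintegral_iUnion (fun _ => measurableSet_ball) hS_disj _).symm
    _ ≤ ∫⁻ x in ball e 1, ENNReal.ofReal (‖x‖ ^ γ) ∂μ := lintegral_mono_set (iUnion_subset hS_sub)

lemma exists_ball_le_setAverage_norm_rpow {s γ : ℝ} (hs : 0 ≤ s) (hγ : γ ≤ -(finrank ℝ E : ℝ))
    {M : ℝ} (hM : 0 ≤ M) : ∃ (w : E) (r : ℝ), 0 < r ∧
      2⁻¹ ^ s * 2⁻¹ ^ finrank ℝ E ≤ ⨍ x in ball w r, ‖x‖ ^ s ∂μ ∧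
      M ≤ ⨍ x in ball w r, ‖x‖ ^ γ ∂μ := by
  obtain ⟨e, he⟩ := exists_norm_eq E zero_le_one
  set v := μ.real (ball (0 : E) 1)
  -- On `ball e 1` the Bochner integral of `‖x‖ ^ γ` is the junk value `0`, hence `ρ < 1`.
  obtain ⟨ρ, hρ₀, hρ₁, hlt⟩ := exists_lt_setLIntegral_ball_of_eq_top μ _
    (by norm_num : (2⁻¹ : ℝ) < 1) (lintegral_norm_rpow_ball_eq_top μ he hγ)
    (ENNReal.ofReal_ne_top (r := M * v))
  have hball_pos := measureReal_ball_pos μ e (by linarith : 0 < ρ)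
  have hball_le : μ.real (ball e ρ) ≤ v :=
    (measureReal_mono (ball_subset_ball hρ₁.le)).trans_eq (Measure.addHaar_real_ball_center μ e 1)
  have hρ : ρ < ‖e‖ := he ▸ hρ₁
  refine ⟨e, ρ, by linarith,
    le_setAverage_of_mul_le_setIntegral hball_pos hball_le (by positivity) ?_,
    le_setAverage_of_mul_le_setIntegral hball_pos hball_le hM ?_⟩
  · have hhalf : ball e 2⁻¹ ⊆ ball e ρ := ball_subset_ball hρ₀
    have hint := integrableOn_norm_rpow_ball_of_lt_norm μ hρ s
    calc 2⁻¹ ^ s * 2⁻¹ ^ finrank ℝ E * v = 2⁻¹ ^ s * μ.real (ball e 2⁻¹) := by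
          rw [addHaar_real_ball μ e (by norm_num), mul_assoc]
      _ ≤ ∫ x in ball e 2⁻¹, ‖x‖ ^ s ∂μ :=
          setIntegral_ge_of_const_le_real measurableSet_ball measure_ball_lt_top.ne
            (fun x hx => Real.rpow_le_rpow (by norm_num)
              (by linarith [norm_lt_of_mem_ball (mem_ball_comm.1 hx)]) hs)
            (hint.mono_set hhalf)
      _ ≤ ∫ x in ball e ρ, ‖x‖ ^ s ∂μ :=
          setIntegral_mono_set hint (.of_forall fun x => by positivity) hhalf.eventuallyLE
  · rw [← ofReal_integral_eq_lintegral_ofReal (integrableOn_norm_rpow_ball_of_lt_norm μ hρ γ)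
      (.of_forall fun x => by positivity), ENNReal.ofReal_lt_ofReal_iff'] at hlt
    exact hlt.1.le

lemma exists_lt_ballApRatio_norm_rpow {p s : ℝ} (hp : 1 < p) (hs : 0 ≤ s)
    (hsp : (p - 1) * finrank ℝ E ≤ s) (C : ℝ) :
    ∃ (w : E) (r : ℝ), 0 < r ∧ C < ballApRatio μ p (fun x => ‖x‖ ^ s) w r := by
  have hp₁ : 0 < p - 1 := by linarith
  set c : ℝ := 2⁻¹ ^ s * 2⁻¹ ^ finrank ℝ E
  have hc : 0 < c := by positivity
  obtain ⟨M, hCM, hM⟩ := (((tendsto_rpow_atTop hp₁).const_mul_atTop hc).eventually_gt_atTop C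
    |>.and (eventually_ge_atTop 0)).exists
  obtain ⟨w, r, hr, hu, hσ⟩ := exists_ball_le_setAverage_norm_rpow μ hs
    (γ := -(s / (p - 1))) (neg_le_neg ((le_div_iff₀ hp₁).2 (by linarith))) hM
  refine ⟨w, r, hr, hCM.trans_le ?_⟩
  rw [ballApRatio_norm_rpow]
  exact mul_le_mul hu (Real.rpow_le_rpow hM hσ hp₁.le) (by positivity) (hc.le.trans hu)

end NormRpow

/-- For `d ≥ 2` and `s ≥ 0`, the weight `u(x) = |x'|^s` belongs to `A_p(ℝ^d)`
if and only if `s < (p-1)(d-1)`. -/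
theorem memAp_norm_fst_rpow_iff (d : ℕ) (hd : 2 ≤ d) (p s : ℝ) (hp : 1 < p) (hs : 0 ≤ s) :
    MemAp (d := d) p (fun x => ‖x.1‖ ^ s) ↔ s < (p - 1) * ((d : ℝ) - 1) := by
  have : Nonempty (Fin (d - 1)) := ⟨⟨0, by omega⟩⟩
  have hdim : (Module.finrank ℝ (EuclideanSpace ℝ (Fin (d - 1))) : ℝ) = d - 1 := by
    rw [finrank_euclideanSpace_fin, Nat.cast_sub (by omega), Nat.cast_one]
  have hratio (z : Pt d) {r : ℝ} (hr : 0 < r) : apRatio p (fun x => ‖x.1‖ ^ s) z r =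
      ballApRatio volume p (fun y => ‖y‖ ^ s) z.1 r := apRatio_comp_fst p (fun y => ‖y‖ ^ s) z hr
  constructor
  · rintro ⟨-, C, hC⟩
    by_contra! hge
    obtain ⟨w, r, hr, hlt⟩ := exists_lt_ballApRatio_norm_rpow volume hp hs (hdim ▸ hge) C
    exact (hratio (w, 0) hr ▸ hC (w, 0) r hr).not_gt hlt
  · intro hlt
    obtain ⟨C, hC⟩ := exists_ballApRatio_norm_rpow_le volume hp hs (hdim ▸ hlt)
    refine ⟨(continuous_fst.norm.rpow_const fun _ => Or.inr hs).locallyIntegrable, C,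
      fun z r hr => ?_⟩
    exact hratio z hr ▸ hC z.1 r hr
end

section
/- Let d ≥ 2 and P > 1. Define w(x) = max(1, |x'|^d, |x_d + |x'|^2|^d) on ℝ^d. There exists δ > 0 such that w^t belongs to the Muckenhoupt class A_p(ℝ^d) for all |t| ≤ δ and all p ∈ [P, ∞). -/
/-!
Write `w = W ^ d` with `W x = max 1 (max ‖x'‖ |x_d + ‖x'‖²|)`, and let `M` be an explicit upper
bound of `W` on a ball `B` of radius `r`. The heart of the proof is that `W` is rarely much smaller
than `M` on `B`: `|B ∩ {W < s}| ≤ K √(s / M) |B|`. By Fubini in `x_d` it suffices to bound the set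
of `x'` for which `x_d + ‖x'‖²` can be small. When `B` is near the axis `x' = 0`, this set is a
spherical shell of width `√(2 (s + r))` inside a ball of radius `3 r`. Otherwise it is a slab
transversal to `x'`, since along `x'` the function `‖·‖²` grows at rate at least `‖x'‖`; it is
then measured by packing disjoint translates into a larger ball. In both cases, `M ≲ r (‖x'‖ + r)`
as soon as `B` contains a point with `W < s ≪ M`.

Splitting the range of `W` dyadically, the sublevel estimate gives `⨍_B W ^ (-q) ≤ C M ^ (-q)`
for `0 ≤ q ≤ 1/4`, while `⨍_B W ^ q ≤ M ^ q` trivially. For `a = d t` with `|a|` small compared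
with `min 1 (p - 1)`, one factor of the `A_p` ratio of `W ^ a` is then bounded by a power of `M`
and the other by `C` times the reciprocal power.
-/

open MeasureTheory Metric

/-- The weight `w(x) = max(1, |x'|^d, |x_d + |x'|²|^d)`. -/
noncomputable def wW (d : ℕ) (x : Pt d) : ℝ :=
  max 1 (max (‖x.1‖ ^ d) (|x.2 + ‖x.1‖ ^ 2| ^ d))

open Set Module
open scoped ENNReal RealInnerProductSpace

theorem Real.sqrt_sub_sqrt_le_sqrt_sub (a b : ℝ) : √b - √a ≤ √(b - a) := by
  rcases le_or_gt b a with hba | hab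
  · linarith [Real.sqrt_le_sqrt hba, Real.sqrt_nonneg (b - a)]
  rcases le_or_gt a 0 with ha | ha
  · rw [Real.sqrt_eq_zero'.2 ha, sub_zero]
    exact Real.sqrt_le_sqrt (by linarith)
  rw [sub_le_iff_le_add, Real.sqrt_le_iff]
  refine ⟨by positivity, ?_⟩
  nlinarith [Real.sq_sqrt ha.le, Real.sq_sqrt (sub_nonneg.2 hab.le),
    mul_nonneg (Real.sqrt_nonneg (b - a)) (Real.sqrt_nonneg a)]

theorem pow_sub_pow_le_of_le {ρ₁ ρ₂ : ℝ} (hρ₁ : 0 ≤ ρ₁) (hρ : ρ₁ ≤ ρ₂) (n : ℕ) :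
    ρ₂ ^ n - ρ₁ ^ n ≤ n * ρ₂ ^ (n - 1) * (ρ₂ - ρ₁) := by
  have h := abs_pow_sub_pow_le ρ₂ ρ₁ n
  rw [abs_of_nonneg (sub_nonneg.2 (pow_le_pow_left₀ hρ₁ hρ n)), abs_of_nonneg (sub_nonneg.2 hρ),
    abs_of_nonneg (hρ₁.trans hρ), abs_of_nonneg hρ₁, max_eq_left hρ] at h
  linarith

theorem rpow_neg_le_sum_indicator {y q : ℝ} (hq : 0 ≤ q) (hy : 1 ≤ y) {N : ℕ}
    (hyN : y < 2 ^ (N + 1)) :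
    y ^ (-q) ≤ ∑ k ∈ Finset.range (N + 1),
      {u : ℝ | u < 2 ^ (k + 1)}.indicator (fun _ => ((2 : ℝ) ^ k) ^ (-q)) y := by
  obtain ⟨j, hj₁, hj₂⟩ := exists_nat_pow_near hy one_lt_two
  have hjN : j ∈ Finset.range (N + 1) :=
    Finset.mem_range.2 ((pow_lt_pow_iff_right₀ one_lt_two).1 (hj₁.trans_lt hyN))
  refine le_trans ?_
    (Finset.single_le_sum (fun k _ => indicator_nonneg (fun _ _ => by positivity) _) hjN)
  rw [indicator_of_mem (show y ∈ {u : ℝ | u < 2 ^ (j + 1)} from hj₂)]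
  exact Real.rpow_le_rpow_of_nonpos (by positivity) hj₁ (neg_nonpos.2 hq)

theorem setIntegral_rpow_neg_le_sum {α : Type*} [MeasurableSpace α] {μ : Measure α} {B : Set α}
    {f : α → ℝ} {q : ℝ} {N : ℕ} (hB : MeasurableSet B) (hμB : μ B ≠ ∞) (hf : Measurable f)
    (hf₁ : ∀ x ∈ B, 1 ≤ f x) (hfN : ∀ x ∈ B, f x < 2 ^ (N + 1)) (hq : 0 ≤ q) :
    ∫ x in B, f x ^ (-q) ∂μ ≤
      ∑ k ∈ Finset.range (N + 1), μ.real (B ∩ {x | f x < 2 ^ (k + 1)}) * ((2 : ℝ) ^ k) ^ (-q) := by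
  have hfin : IsFiniteMeasure (μ.restrict B) := isFiniteMeasure_restrict.2 hμB
  have hlev : ∀ k : ℕ, MeasurableSet {x | f x < 2 ^ (k + 1)} := fun k =>
    measurableSet_lt hf measurable_const
  have hind : ∀ k : ℕ, Integrable ({x | f x < 2 ^ (k + 1)}.indicator
      fun _ => ((2 : ℝ) ^ k) ^ (-q)) (μ.restrict B) := fun k =>
    (integrable_const _).indicator (hlev k)
  have hfq : IntegrableOn (fun x => f x ^ (-q)) B μ :=
    Measure.integrableOn_of_bounded hμB (hf.pow_const _).aestronglyMeasurable (M := 1)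
      (ae_restrict_of_forall_mem hB fun x hx => by
        rw [Real.norm_of_nonneg (Real.rpow_nonneg (by linarith [hf₁ x hx]) _)]
        exact Real.rpow_le_one_of_one_le_of_nonpos (hf₁ x hx) (neg_nonpos.2 hq))
  refine (setIntegral_mono_on hfq (integrable_finsetSum _ fun k _ => hind k) hB fun x hx =>
    rpow_neg_le_sum_indicator hq (hf₁ x hx) (hfN x hx)).trans_eq ?_
  rw [integral_finsetSum _ fun k _ => hind k]
  refine Finset.sum_congr rfl fun k _ => ?_
  rw [integral_indicator_const _ (hlev k), measureReal_restrict_apply (hlev k), inter_comm,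
    smul_eq_mul]

theorem setIntegral_rpow_neg_le_of_sublevel_le {α : Type*} [MeasurableSpace α] {μ : Measure α}
    {B : Set α} {f : α → ℝ} {M K ε q : ℝ} (hB : MeasurableSet B) (hμB : μ B ≠ ∞)
    (hf : Measurable f) (hf₁ : ∀ x ∈ B, 1 ≤ f x) (hfM : ∀ x ∈ B, f x ≤ M) (hK : 0 ≤ K)
    (hsub : ∀ s, μ.real (B ∩ {x | f x < s}) ≤ K * (s / M) ^ ε * μ.real B)
    (hq : 0 ≤ q) (hqε : q < ε) :
    ∫ x in B, f x ^ (-q) ∂μ ≤ K * 4 ^ ε / (2 ^ (ε - q) - 1) * M ^ (-q) * μ.real B := by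
  rcases B.eq_empty_or_nonempty with rfl | ⟨x₀, hx₀⟩
  · simp
  have hM : 1 ≤ M := (hf₁ x₀ hx₀).trans (hfM x₀ hx₀)
  obtain ⟨N, hNM, hMN⟩ := exists_nat_pow_near hM one_lt_two
  set ρ : ℝ := 2 ^ (ε - q)
  have hρ : 1 < ρ := Real.one_lt_rpow one_lt_two (sub_pos.2 hqε)
  have hterm : ∀ k : ℕ, K * ((2 : ℝ) ^ (k + 1) / M) ^ ε * μ.real B * ((2 : ℝ) ^ k) ^ (-q) =
      K * (2 / M) ^ ε * μ.real B * ρ ^ k := by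
    intro k
    rw [pow_succ', mul_div_right_comm, Real.mul_rpow (by positivity) (by positivity),
      Real.rpow_pow_comm zero_le_two, sub_eq_add_neg, Real.rpow_add (by positivity)]
    ring
  have hgeom : ∑ k ∈ Finset.range (N + 1), ρ ^ k ≤ ρ ^ (N + 1) / (ρ - 1) := by
    rw [geom_sum_eq hρ.ne']
    gcongr
    linarith
  have htop : ρ ^ (N + 1) ≤ (2 * M) ^ ε * M ^ (-q) := by
    change ((2 : ℝ) ^ (ε - q)) ^ (N + 1) ≤ _
    rw [Real.rpow_pow_comm zero_le_two, sub_eq_add_neg, Real.rpow_add (by positivity)]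
    exact mul_le_mul (Real.rpow_le_rpow (by positivity) (by rw [pow_succ']; linarith) (by linarith))
      (Real.rpow_le_rpow_of_nonpos (by positivity) hMN.le (neg_nonpos.2 hq)) (by positivity)
      (by positivity)
  calc ∫ x in B, f x ^ (-q) ∂μ
      ≤ ∑ k ∈ Finset.range (N + 1),
          K * ((2 : ℝ) ^ (k + 1) / M) ^ ε * μ.real B * ((2 : ℝ) ^ k) ^ (-q) :=
        (setIntegral_rpow_neg_le_sum hB hμB hf hf₁ (fun x hx => (hfM x hx).trans_lt hMN) hq).trans
          (Finset.sum_le_sum fun k _ => by gcongr; exact hsub _)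
    _ = K * (2 / M) ^ ε * μ.real B * ∑ k ∈ Finset.range (N + 1), ρ ^ k := by
        rw [Finset.mul_sum]; exact Finset.sum_congr rfl fun k _ => hterm k
    _ ≤ K * (2 / M) ^ ε * μ.real B * ((2 * M) ^ ε * M ^ (-q) / (ρ - 1)) := by
        gcongr
        exact hgeom.trans (by gcongr)
    _ = K * 4 ^ ε / (ρ - 1) * M ^ (-q) * μ.real B := by
        rw [show (4 : ℝ) = 2 / M * (2 * M) by field_simp; norm_num,
          Real.mul_rpow (x := 2 / M) (y := 2 * M) (by positivity) (by positivity)]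
        ring

theorem setAverage_rpow_mul_setAverage_rpow_le {α : Type*} [MeasurableSpace α] {μ : Measure α}
    {B : Set α} {f : α → ℝ} {M C η a p : ℝ} (hf : ∀ x, 0 ≤ f x) (hM : 0 < M) (hC : 0 ≤ C)
    (hpos : ∀ s : ℝ, 0 ≤ s → ⨍ x in B, f x ^ s ∂μ ≤ M ^ s)
    (hneg : ∀ q : ℝ, 0 ≤ q → q ≤ η → ⨍ x in B, f x ^ (-q) ∂μ ≤ C * M ^ (-q))
    (hp : 1 < p) (ha : |a| ≤ η) (hap : |a| ≤ η * (p - 1)) :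
    (⨍ x in B, f x ^ a ∂μ) * (⨍ x in B, (f x ^ a) ^ (-(1 / (p - 1))) ∂μ) ^ (p - 1) ≤
      max (C ^ (p - 1)) C := by
  have hp₀ : 0 < p - 1 := sub_pos.2 hp
  have hdual : ∀ x, (f x ^ a) ^ (-(1 / (p - 1))) = f x ^ (-(a / (p - 1))) := fun x => by
    rw [← Real.rpow_mul (hf x)]; ring_nf
  have hb : |a / (p - 1)| ≤ η := by
    rw [abs_div, abs_of_pos hp₀, div_le_iff₀ hp₀]; exact hap
  have havg : ∀ c : ℝ, 0 ≤ ⨍ x in B, f x ^ c ∂μ := fun c => by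
    rw [setAverage_eq, smul_eq_mul]
    exact mul_nonneg (inv_nonneg.2 measureReal_nonneg)
      (integral_nonneg fun x => Real.rpow_nonneg (hf x) c)
  have hMpow : ∀ c, (M ^ (-(c / (p - 1)))) ^ (p - 1) = M ^ (-c) := fun c => by
    rw [← Real.rpow_mul hM.le]; field_simp
  simp only [hdual]
  rcases le_total 0 a with ha₀ | ha₀
  · calc (⨍ x in B, f x ^ a ∂μ) * (⨍ x in B, f x ^ (-(a / (p - 1))) ∂μ) ^ (p - 1)
        ≤ M ^ a * (C * M ^ (-(a / (p - 1)))) ^ (p - 1) :=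
          mul_le_mul (hpos a ha₀) (Real.rpow_le_rpow (havg _)
            (hneg _ (by positivity) ((le_abs_self _).trans hb)) hp₀.le)
            (Real.rpow_nonneg (havg _) _) (Real.rpow_nonneg hM.le a)
      _ = C ^ (p - 1) := by
          rw [Real.mul_rpow hC (by positivity), hMpow, mul_left_comm, ← Real.rpow_add hM,
            add_neg_cancel, Real.rpow_zero, mul_one]
      _ ≤ _ := le_max_left _ _
  · calc (⨍ x in B, f x ^ a ∂μ) * (⨍ x in B, f x ^ (-(a / (p - 1))) ∂μ) ^ (p - 1)
        ≤ (C * M ^ a) * (M ^ (-(a / (p - 1)))) ^ (p - 1) :=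
          mul_le_mul (by simpa using hneg (-a) (by linarith) (by rwa [abs_of_nonpos ha₀] at ha))
            (Real.rpow_le_rpow (havg _)
              (hpos _ (neg_nonneg.2 (div_nonpos_of_nonpos_of_nonneg ha₀ hp₀.le))) hp₀.le)
            (Real.rpow_nonneg (havg _) _) (mul_nonneg hC (Real.rpow_nonneg hM.le a))
      _ = C := by
          rw [hMpow, mul_assoc, ← Real.rpow_add hM, add_neg_cancel, Real.rpow_zero, mul_one]
      _ ≤ _ := le_max_right _ _

section Packing

variable {F : Type*} [NormedAddCommGroup F] [MeasurableSpace F] [BorelSpace F]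
  (μ : Measure F) [μ.IsAddRightInvariant]

theorem natCast_mul_measure_le_of_disjoint_translates {S : Set F} (hS : MeasurableSet S) {c w : F}
    {r : ℝ} (hSc : S ⊆ ball c r) (hw : ∀ x ∈ S, ∀ k : ℕ, 0 < k → x + k • w ∉ S) (N : ℕ) :
    N * μ S ≤ μ (ball c (r + N * ‖w‖)) := by
  set U : ℕ → Set F := fun j => (· - j • w) ⁻¹' S
  have hdisj : (Finset.range N : Set ℕ).Pairwise (Function.onFun Disjoint U) := by
    intro i hi j hj hij
    wlog hlt : i < j generalizing i j
    · exact (this hj hi hij.symm (lt_of_le_of_ne (not_lt.1 hlt) hij.symm)).symm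
    refine Set.disjoint_left.2 fun x hxi hxj => hw _ hxj (j - i) (Nat.sub_pos_of_lt hlt) ?_
    change x - j • w + (j - i) • w ∈ S
    rwa [sub_nsmul _ hlt.le, ← sub_eq_add_neg, sub_add_sub_cancel]
  have hU : ∀ j ∈ Finset.range N, U j ⊆ ball c (r + N * ‖w‖) := by
    intro j hj x hx
    have hjN : (j : ℝ) ≤ N := by exact_mod_cast (Finset.mem_range.1 hj).le
    calc dist x c ≤ dist (x - j • w) c + ‖j • w‖ := by
          simpa [dist_eq_norm, sub_right_comm] using norm_add_le (x - c - j • w) (j • w)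
      _ < r + N * ‖w‖ :=
          add_lt_add_of_lt_of_le (mem_ball.1 (hSc hx)) (norm_nsmul_le.trans (by gcongr))
  calc (N : ℝ≥0∞) * μ S = ∑ j ∈ Finset.range N, μ (U j) := by
        simp [U, sub_eq_add_neg, measure_preimage_add_right]
    _ = μ (⋃ j ∈ Finset.range N, U j) :=
        (measure_biUnion_finset hdisj fun j _ => hS.preimage (measurable_sub_const _)).symm
    _ ≤ _ := measure_mono (iUnion₂_subset hU)

theorem measure_le_of_forall_add_smul_mem_le [NormedSpace ℝ F] {S : Set F} (hS : MeasurableSet S)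
    {c v : F} (hv : ‖v‖ = 1) {r ε : ℝ} (hε : 0 < ε) (hεr : ε ≤ 2 * r) (hSc : S ⊆ ball c r)
    (hfib : ∀ x ∈ S, ∀ a : ℝ, 0 < a → x + a • v ∈ S → a ≤ ε) :
    μ S ≤ ENNReal.ofReal (ε / r) * μ (ball c (7 * r)) := by
  have hr : 0 < r := by linarith
  set N := ⌈r / ε⌉₊
  have hw : ∀ x ∈ S, ∀ k : ℕ, 0 < k → x + k • (2 * ε) • v ∉ S := by
    intro x hx k hk hxk
    rw [← Nat.cast_smul_eq_nsmul ℝ, smul_smul] at hxk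
    have hk1 : (1 : ℝ) ≤ k := by exact_mod_cast hk
    nlinarith [hfib x hx _ (by positivity) hxk]
  have hNε : N * (2 * ε) ≤ 6 * r := by
    nlinarith [Nat.ceil_lt_add_one (div_pos hr hε).le, mul_div_cancel₀ r hε.ne']
  have hN : 1 ≤ ENNReal.ofReal (ε / r) * N := by
    rw [← ENNReal.ofReal_natCast, ← ENNReal.ofReal_mul (by positivity), ENNReal.one_le_ofReal,
      div_mul_eq_mul_div, one_le_div hr]
    nlinarith [Nat.le_ceil (r / ε), mul_div_cancel₀ r hε.ne']
  calc μ S ≤ ENNReal.ofReal (ε / r) * (N * μ S) := by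
        rw [← mul_assoc]; exact le_mul_of_one_le_left' hN
    _ ≤ ENNReal.ofReal (ε / r) * μ (ball c (7 * r)) := by
        gcongr
        refine (natCast_mul_measure_le_of_disjoint_translates μ hS hSc hw N).trans
          (measure_mono (ball_subset_ball ?_))
        rw [norm_smul, hv, Real.norm_of_nonneg (by positivity)]
        linarith

end Packing

section Shell

variable {E : Type*} [NormedAddCommGroup E] [NormedSpace ℝ E] [FiniteDimensional ℝ E]
  [Nontrivial E] [MeasurableSpace E] [BorelSpace E] (μ : Measure E) [μ.IsAddHaarMeasure]

theorem addHaar_closedBall_diff_ball_le (x : E) {ρ₁ ρ₂ : ℝ} (hρ₁ : 0 ≤ ρ₁) (hρ : ρ₁ ≤ ρ₂) :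
    μ (closedBall x ρ₂ \ ball x ρ₁) ≤
      ENNReal.ofReal (finrank ℝ E * ρ₂ ^ (finrank ℝ E - 1) * (ρ₂ - ρ₁)) * μ (ball 0 1) := by
  rw [measure_sdiff (ball_subset_closedBall.trans (closedBall_subset_closedBall hρ))
      measurableSet_ball.nullMeasurableSet measure_ball_lt_top.ne,
    Measure.addHaar_closedBall μ x (hρ₁.trans hρ), Measure.addHaar_ball μ x hρ₁,
    ← ENNReal.sub_mul fun _ _ => measure_ball_lt_top.ne, ← ENNReal.ofReal_sub _ (by positivity)]
  gcongr
  exact pow_sub_pow_le_of_le hρ₁ hρ _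

theorem addHaar_closedBall_inter_sq_norm_mem_Ioo_le {R : ℝ} (hR : 0 ≤ R) (a b : ℝ) :
    μ (closedBall 0 R ∩ {x | ‖x‖ ^ 2 ∈ Ioo a b}) ≤
      ENNReal.ofReal (finrank ℝ E * R ^ (finrank ℝ E - 1) * √(b - a)) * μ (ball 0 1) := by
  have hsub : closedBall 0 R ∩ {x : E | ‖x‖ ^ 2 ∈ Ioo a b} ⊆
      closedBall 0 (min R √b) \ ball 0 √a := by
    rintro x ⟨hxR, hax, hxb⟩
    rw [mem_closedBall_zero_iff] at hxR
    rw [mem_sdiff, mem_closedBall_zero_iff, mem_ball_zero_iff, not_lt,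
      ← Real.sqrt_sq (norm_nonneg x)]
    exact ⟨le_min (by rwa [Real.sqrt_sq (norm_nonneg x)]) (Real.sqrt_le_sqrt hxb.le),
      Real.sqrt_le_sqrt hax.le⟩
  rcases le_or_gt √a (min R √b) with h | h
  · refine (measure_mono hsub).trans
      ((addHaar_closedBall_diff_ball_le μ 0 (by positivity) h).trans ?_)
    gcongr
    · exact min_le_left _ _
    · exact (sub_le_sub_right (min_le_right _ _) _).trans (Real.sqrt_sub_sqrt_le_sqrt_sub a b)
  · rw [sdiff_eq_empty.2 (closedBall_subset_ball h)] at hsub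
    rw [subset_empty_iff.1 hsub, measure_empty]
    exact zero_le

end Shell

section Weight

variable {E : Type*} [NormedAddCommGroup E]

noncomputable def baseWeight (x : E × ℝ) : ℝ :=
  max 1 (max ‖x.1‖ |x.2 + ‖x.1‖ ^ 2|)

noncomputable def baseWeightBound (z : E × ℝ) (r : ℝ) : ℝ :=
  max 1 (max (‖z.1‖ + r) (|z.2 + ‖z.1‖ ^ 2| + r * (1 + 2 * ‖z.1‖ + r)))

def sublevelShadow (z : E × ℝ) (r s : ℝ) : Set E :=
  {y | y ∈ ball z.1 r ∧ |z.2 + ‖y‖ ^ 2| < s + r}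

theorem one_le_baseWeight (x : E × ℝ) : 1 ≤ baseWeight x := le_max_left _ _

theorem one_le_baseWeightBound (z : E × ℝ) (r : ℝ) : 1 ≤ baseWeightBound z r := le_max_left _ _

theorem continuous_baseWeight : Continuous (baseWeight : E × ℝ → ℝ) := by
  unfold baseWeight; fun_prop

theorem continuous_baseWeight_rpow (c : ℝ) : Continuous fun x : E × ℝ => baseWeight x ^ c :=
  continuous_baseWeight.rpow_const fun x => Or.inl (zero_lt_one.trans_le (one_le_baseWeight x)).ne'

theorem mem_ball_prod_iff {z x : E × ℝ} {r : ℝ} :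
    x ∈ ball z r ↔ ‖x.1 - z.1‖ < r ∧ |x.2 - z.2| < r := by
  rw [mem_ball, Prod.dist_eq, max_lt_iff, dist_eq_norm, Real.dist_eq]

theorem abs_norm_sq_sub_norm_sq_lt {y y₀ : E} {r : ℝ} (h : ‖y - y₀‖ < r) :
    |‖y‖ ^ 2 - ‖y₀‖ ^ 2| < r * (2 * ‖y₀‖ + r) := by
  have h₁ : |‖y‖ - ‖y₀‖| < r := (abs_norm_sub_norm_le y y₀).trans_lt h
  have h₂ : ‖y‖ < ‖y₀‖ + r := by linarith [abs_lt.1 h₁]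
  rw [show ‖y‖ ^ 2 - ‖y₀‖ ^ 2 = (‖y‖ - ‖y₀‖) * (‖y‖ + ‖y₀‖) by ring, abs_mul,
    abs_of_nonneg (by positivity : 0 ≤ ‖y‖ + ‖y₀‖)]
  exact mul_lt_mul'' h₁ (by linarith) (abs_nonneg _) (by positivity)

theorem baseWeight_le_baseWeightBound {z x : E × ℝ} {r : ℝ} (hx : x ∈ ball z r) :
    baseWeight x ≤ baseWeightBound z r := by
  obtain ⟨h₁, h₂⟩ := mem_ball_prod_iff.1 hx
  have hsq := abs_norm_sq_sub_norm_sq_lt h₁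
  have hx₁ : ‖x.1‖ ≤ ‖z.1‖ + r := by linarith [norm_le_norm_add_norm_sub' x.1 z.1]
  refine max_le_max le_rfl (max_le (le_max_of_le_left hx₁) (le_max_of_le_right ?_))
  calc |x.2 + ‖x.1‖ ^ 2|
      ≤ |z.2 + ‖z.1‖ ^ 2| + |x.2 - z.2| + |‖x.1‖ ^ 2 - ‖z.1‖ ^ 2| := by
        rw [show x.2 + ‖x.1‖ ^ 2 = (z.2 + ‖z.1‖ ^ 2) + (x.2 - z.2) + (‖x.1‖ ^ 2 - ‖z.1‖ ^ 2) by
          ring]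
        exact abs_add_three _ _ _
    _ ≤ |z.2 + ‖z.1‖ ^ 2| + r * (1 + 2 * ‖z.1‖ + r) := by linarith

theorem norm_fst_lt_of_baseWeight_lt {z x : E × ℝ} {r s : ℝ} (hx : x ∈ ball z r)
    (hxs : baseWeight x < s) : ‖z.1‖ < s + r := by
  have h₁ := (mem_ball_prod_iff.1 hx).1
  have : ‖x.1‖ < s := (le_max_left _ _).trans_lt ((le_max_right _ _).trans_lt hxs)
  linarith [norm_sub_norm_le z.1 x.1, norm_sub_rev x.1 z.1]

theorem baseWeightBound_lt_of_baseWeight_lt {z x : E × ℝ} {r s : ℝ} (hx : x ∈ ball z r)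
    (hxs : baseWeight x < s) :
    baseWeightBound z r < s + 2 * r + 4 * r * (‖z.1‖ + r) := by
  have hA := norm_fst_lt_of_baseWeight_lt hx hxs
  obtain ⟨h₁, h₂⟩ := mem_ball_prod_iff.1 hx
  simp only [baseWeight, max_lt_iff] at hxs
  obtain ⟨hs, -, hx₂⟩ := hxs
  have hr : 0 < r := (norm_nonneg _).trans_lt h₁
  have hsq := abs_norm_sq_sub_norm_sq_lt h₁
  have hz : |z.2 + ‖z.1‖ ^ 2| < s + r + r * (2 * ‖z.1‖ + r) := by
    calc |z.2 + ‖z.1‖ ^ 2|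
        ≤ |x.2 + ‖x.1‖ ^ 2| + |x.2 - z.2| + |‖x.1‖ ^ 2 - ‖z.1‖ ^ 2| := by
          rw [show z.2 + ‖z.1‖ ^ 2 = (x.2 + ‖x.1‖ ^ 2) - (x.2 - z.2) - (‖x.1‖ ^ 2 - ‖z.1‖ ^ 2) by
            ring]
          linarith [abs_sub (x.2 + ‖x.1‖ ^ 2 - (x.2 - z.2)) (‖x.1‖ ^ 2 - ‖z.1‖ ^ 2),
            abs_sub (x.2 + ‖x.1‖ ^ 2) (x.2 - z.2)]
      _ < s + r + r * (2 * ‖z.1‖ + r) := by linarith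
  unfold baseWeightBound
  refine max_lt (by nlinarith [norm_nonneg z.1]) (max_lt (by nlinarith [norm_nonneg z.1]) ?_)
  nlinarith [norm_nonneg z.1]

theorem isOpen_sublevelShadow (z : E × ℝ) (r s : ℝ) : IsOpen (sublevelShadow z r s) :=
  isOpen_ball.inter (isOpen_lt (continuous_const.add (continuous_norm.pow 2)).abs continuous_const)

theorem mem_sublevelShadow_of_mem {z : E × ℝ} {r s : ℝ} {y : E} {t : ℝ}
    (h : (y, t) ∈ ball z r ∩ {x | baseWeight x < s}) :
    y ∈ sublevelShadow z r s ∧ t ∈ Ioo (z.2 - r) (z.2 + r) ∩ Ioo (-‖y‖ ^ 2 - s) (s - ‖y‖ ^ 2) := by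
  obtain ⟨hb, hw⟩ := h
  obtain ⟨h₁, h₂⟩ : ‖y - z.1‖ < r ∧ |t - z.2| < r := mem_ball_prod_iff.1 hb
  have h₃ : |t + ‖y‖ ^ 2| < s := (le_max_right _ _).trans_lt ((le_max_right _ _).trans_lt hw)
  refine ⟨⟨by rwa [mem_ball, dist_eq_norm], ?_⟩, ?_⟩
  · have := abs_add_le (z.2 - t) (t + ‖y‖ ^ 2)
    rw [show z.2 - t + (t + ‖y‖ ^ 2) = z.2 + ‖y‖ ^ 2 by ring] at this
    linarith [abs_sub_comm z.2 t]
  · rw [abs_lt] at h₂ h₃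
    exact ⟨⟨by linarith, by linarith⟩, ⟨by linarith, by linarith⟩⟩

variable [MeasureSpace E]

theorem volume_ball_eq_mul (z : E × ℝ) (r : ℝ) :
    volume (ball z r) = volume (ball z.1 r) * ENNReal.ofReal (2 * r) := by
  rw [← ball_prod_same z.1 z.2 r, Measure.volume_eq_prod, Measure.prod_prod, Real.volume_ball]

theorem volume_ball_inter_baseWeight_lt_le_sublevelShadow [BorelSpace E] (z : E × ℝ) (r s : ℝ) :
    volume (ball z r ∩ {x | baseWeight x < s}) ≤
      volume (sublevelShadow z r s) * ENNReal.ofReal (min (2 * r) (2 * s)) := by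
  have hS : MeasurableSet (ball z r ∩ {x | baseWeight x < s}) :=
    measurableSet_ball.inter (isOpen_lt continuous_baseWeight continuous_const).measurableSet
  rw [Measure.volume_eq_prod, Measure.prod_apply hS, mul_comm, ← lintegral_indicator_const
    (isOpen_sublevelShadow z r s).measurableSet]
  refine lintegral_mono fun y => ?_
  by_cases hy : y ∈ sublevelShadow z r s
  · rw [indicator_of_mem hy]
    calc volume (Prod.mk y ⁻¹' (ball z r ∩ {x | baseWeight x < s}))
        ≤ volume (Ioo (z.2 - r) (z.2 + r) ∩ Ioo (-‖y‖ ^ 2 - s) (s - ‖y‖ ^ 2)) :=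
          measure_mono fun t ht => (mem_sublevelShadow_of_mem ht).2
      _ ≤ ENNReal.ofReal (min (2 * r) (2 * s)) := by
          rw [ENNReal.ofReal_min]
          refine le_min ((measure_mono inter_subset_left).trans ?_)
            ((measure_mono inter_subset_right).trans ?_) <;>
          simp only [Real.volume_Ioo] <;> ring_nf <;> rfl
  · rw [indicator_of_notMem hy, nonpos_iff_eq_zero, measure_eq_zero_iff_ae_notMem]
    exact ae_of_all _ fun t ht => hy (mem_sublevelShadow_of_mem (y := y) (t := t) ht).1

theorem volume_ball_inter_baseWeight_lt_le_of_le (z : E × ℝ) {r s K : ℝ} (hs : 0 < s)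
    (hM : baseWeightBound z r ≤ 8 * s) (hK : 3 ≤ K) :
    volume (ball z r ∩ {x | baseWeight x < s}) ≤
      ENNReal.ofReal (K * √(s / baseWeightBound z r)) * volume (ball z r) := by
  have hM₀ : 0 < baseWeightBound z r := zero_lt_one.trans_le (one_le_baseWeightBound z r)
  have h : 1 / 3 ≤ √(s / baseWeightBound z r) := by
    rw [Real.le_sqrt (by norm_num) (by positivity), le_div_iff₀ hM₀]
    linarith
  calc volume (ball z r ∩ {x | baseWeight x < s}) ≤ 1 * volume (ball z r) := by
        rw [one_mul]; exact measure_mono inter_subset_left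
    _ ≤ _ := by
        gcongr
        rw [ENNReal.one_le_ofReal]
        nlinarith

theorem volume_sublevelShadow_le_of_norm_le [NormedSpace ℝ E] [FiniteDimensional ℝ E]
    [Nontrivial E] [BorelSpace E] [(volume : Measure E).IsAddHaarMeasure] (z : E × ℝ) {r : ℝ}
    (hr : 0 < r) (hA : ‖z.1‖ ≤ 2 * r) (s : ℝ) :
    volume (sublevelShadow z r s) ≤ ENNReal.ofReal
      (finrank ℝ E * 3 ^ (finrank ℝ E - 1) * √(2 * (s + r)) / r) * volume (ball z.1 r) := by
  have hshell : sublevelShadow z r s ⊆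
      closedBall 0 (3 * r) ∩ {y | ‖y‖ ^ 2 ∈ Ioo (-z.2 - (s + r)) (-z.2 + (s + r))} := by
    rintro y ⟨hyz, hys⟩
    rw [mem_ball, dist_eq_norm] at hyz
    rw [abs_lt] at hys
    exact ⟨mem_closedBall_zero_iff.2 (by linarith [norm_le_norm_add_norm_sub' y z.1]),
      by linarith, by linarith⟩
  have hn : r ^ finrank ℝ E = r ^ (finrank ℝ E - 1) * r := by
    rw [← pow_succ, Nat.sub_add_cancel finrank_pos]
  refine (measure_mono hshell).trans ((addHaar_closedBall_inter_sq_norm_mem_Ioo_le volume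
    (by positivity : 0 ≤ 3 * r) _ _).trans_eq ?_)
  rw [Measure.addHaar_ball _ _ hr.le, ← mul_assoc, ← ENNReal.ofReal_mul (by positivity)]
  congr 2
  rw [hn, mul_pow]
  field_simp
  ring_nf

theorem volume_ball_inter_baseWeight_lt_le_of_sublevelShadow_le [BorelSpace E] (z : E × ℝ)
    {r s c m K : ℝ} (hr : 0 ≤ r) (hc : 0 ≤ c) (hm : min (2 * r) (2 * s) ≤ m)
    (hshadow : volume (sublevelShadow z r s) ≤ ENNReal.ofReal c * volume (ball z.1 r))
    (hcm : c * m ≤ K * √(s / baseWeightBound z r) * (2 * r)) :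
    volume (ball z r ∩ {x | baseWeight x < s}) ≤
      ENNReal.ofReal (K * √(s / baseWeightBound z r)) * volume (ball z r) :=
  calc volume (ball z r ∩ {x | baseWeight x < s})
      ≤ volume (sublevelShadow z r s) * ENNReal.ofReal (min (2 * r) (2 * s)) :=
        volume_ball_inter_baseWeight_lt_le_sublevelShadow z r s
    _ ≤ ENNReal.ofReal c * volume (ball z.1 r) * ENNReal.ofReal m := by gcongr
    _ = ENNReal.ofReal (c * m) * volume (ball z.1 r) := by
        rw [ENNReal.ofReal_mul hc, mul_right_comm]
    _ ≤ ENNReal.ofReal (K * √(s / baseWeightBound z r) * (2 * r)) * volume (ball z.1 r) := by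
        gcongr
    _ = ENNReal.ofReal (K * √(s / baseWeightBound z r)) * volume (ball z r) := by
        rw [volume_ball_eq_mul, ENNReal.ofReal_mul' (by positivity), mul_right_comm, mul_assoc]

theorem setAverage_baseWeight_rpow_le [NormedSpace ℝ E] [FiniteDimensional ℝ E] [BorelSpace E]
    [(volume : Measure E).IsAddHaarMeasure] (z : E × ℝ) {r s : ℝ} (hr : 0 < r) (hs : 0 ≤ s) :
    ⨍ x in ball z r, baseWeight x ^ s ≤ baseWeightBound z r ^ s := by
  obtain ⟨x, hx, h⟩ := exists_setAverage_le (measure_ball_pos volume z hr).ne'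
    measure_ball_lt_top.ne (((continuous_baseWeight_rpow s).locallyIntegrable.integrableOn_isCompact
      (isCompact_closedBall z r)).mono_set ball_subset_closedBall)
  exact h.trans (Real.rpow_le_rpow (zero_le_one.trans (one_le_baseWeight x))
    (baseWeight_le_baseWeightBound hx) hs)

end Weight

section Sublevel

variable {E : Type*} [NormedAddCommGroup E] [InnerProductSpace ℝ E] [MeasureSpace E] [BorelSpace E]

theorem volume_sublevelShadow_le_of_lt_norm [(volume : Measure E).IsAddRightInvariant] (z : E × ℝ)
    {r s : ℝ} (hr : 0 < r) (hs : 0 < s) (hA : 2 * r < ‖z.1‖) :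
    volume (sublevelShadow z r s) ≤
      ENNReal.ofReal (min (2 * r) (2 * (s + r) / ‖z.1‖) / r) * volume (ball z.1 (7 * r)) := by
  have hA₀ : 0 < ‖z.1‖ := by linarith
  set v := ‖z.1‖⁻¹ • z.1
  have hv : ‖v‖ = 1 := norm_smul_inv_norm (norm_pos_iff.1 hA₀)
  have hinner : ∀ y ∈ sublevelShadow z r s, ‖z.1‖ - r < ⟪v, y⟫ := by
    rintro y ⟨hy, -⟩
    have hvz : ⟪v, z.1⟫ = ‖z.1‖ := by
      rw [real_inner_smul_left, real_inner_self_eq_norm_sq]; field_simp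
    have := (abs_le.1 ((abs_real_inner_le_norm v (y - z.1)).trans_eq (by rw [hv, one_mul]))).1
    rw [inner_sub_right, hvz] at this
    linarith [mem_ball_iff_norm.1 hy]
  refine measure_le_of_forall_add_smul_mem_le volume (isOpen_sublevelShadow z r s).measurableSet
    hv (by positivity) (min_le_left _ _) (fun y hy => hy.1) fun y hy a ha hya => le_min ?_ ?_
  · have h₁ := mem_ball_iff_norm.1 hy.1
    have h₂ := mem_ball_iff_norm.1 hya.1
    have : ‖a • v‖ ≤ ‖y + a • v - z.1‖ + ‖y - z.1‖ := by
      simpa using norm_sub_le (y + a • v - z.1) (y - z.1)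
    rw [norm_smul, hv, mul_one, Real.norm_of_nonneg ha.le] at this
    linarith
  · have hsq : ‖y + a • v‖ ^ 2 = ‖y‖ ^ 2 + 2 * a * ⟪v, y⟫ + a ^ 2 := by
      rw [norm_add_sq_real, inner_smul_right, norm_smul, hv, real_inner_comm,
        Real.norm_of_nonneg ha.le]
      ring
    have h₁ := abs_lt.1 hy.2
    have h₂ := abs_lt.1 hya.2
    rw [le_div_iff₀ hA₀]
    nlinarith [hinner y hy]

variable [FiniteDimensional ℝ E] [(volume : Measure E).IsAddHaarMeasure]

theorem volume_ball_inter_baseWeight_lt_le_of_lt_norm (z : E × ℝ) {r s K : ℝ} (hr : 0 < r)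
    (hA : 2 * r < ‖z.1‖) (hAs : ‖z.1‖ < s + r) (hM : baseWeightBound z r ≤ 7 * r * (‖z.1‖ + r))
    (hK : 10 * 7 ^ finrank ℝ E ≤ K) :
    volume (ball z r ∩ {x | baseWeight x < s}) ≤
      ENNReal.ofReal (K * √(s / baseWeightBound z r)) * volume (ball z r) := by
  set n := finrank ℝ E
  set M := baseWeightBound z r
  set A := ‖z.1‖
  set ε := min (2 * r) (2 * (s + r) / A)
  have hM₀ : 0 < M := zero_lt_one.trans_le (one_le_baseWeightBound z r)
  have hA₀ : 0 < A := by linarith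
  have hε₀ : 0 ≤ ε / r :=
    div_nonneg (le_min (by positivity) (div_nonneg (by linarith) hA₀.le)) hr.le
  have hε : ε / r ≤ 10 * √(s / M) := by
    have hε₂ : ε / r ≤ 2 := (div_le_iff₀ hr).2 (by linarith [min_le_left (2 * r) (2 * (s + r) / A)])
    have hεA : ε / r * (r * A) ≤ 4 * s := by
      rw [show ε / r * (r * A) = ε * A by field_simp]
      linarith [(le_div_iff₀ hA₀).1 (min_le_right (2 * r) (2 * (s + r) / A))]
    have hMA : M ≤ 21 / 2 * (r * A) := by nlinarith
    have : ε / r / 10 ≤ √(s / M) := by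
      rw [Real.le_sqrt (div_nonneg hε₀ (by norm_num)) (div_nonneg (by linarith) hM₀.le),
        le_div_iff₀ hM₀]
      nlinarith [mul_le_mul_of_nonneg_left hMA (sq_nonneg (ε / r)),
        mul_le_mul_of_nonneg_left hεA hε₀]
    linarith
  refine volume_ball_inter_baseWeight_lt_le_of_sublevelShadow_le z hr.le (c := 7 ^ n * (ε / r))
    (by positivity) (min_le_left _ _) ?_ ?_
  · calc volume (sublevelShadow z r s) ≤ ENNReal.ofReal (ε / r) * volume (ball z.1 (7 * r)) :=
          volume_sublevelShadow_le_of_lt_norm z hr (by linarith) hA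
      _ = ENNReal.ofReal (7 ^ n * (ε / r)) * volume (ball z.1 r) := by
          rw [Measure.addHaar_ball_mul_of_pos _ _ (by norm_num : (0 : ℝ) < 7),
            Measure.addHaar_ball_center volume z.1 r, ENNReal.ofReal_mul (by positivity)]
          ring
  · calc 7 ^ n * (ε / r) * (2 * r) ≤ 7 ^ n * (10 * √(s / M)) * (2 * r) := by gcongr
      _ = 10 * 7 ^ n * √(s / M) * (2 * r) := by ring
      _ ≤ K * √(s / M) * (2 * r) := by gcongr

variable [Nontrivial E]

theorem volume_ball_inter_baseWeight_lt_le_of_norm_le (z : E × ℝ) {r s K : ℝ} (hr : 0 < r)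
    (hs : 0 < s) (hA : ‖z.1‖ ≤ 2 * r) (hM : baseWeightBound z r ≤ 21 * r ^ 2)
    (hK : 10 * finrank ℝ E * 3 ^ (finrank ℝ E - 1) ≤ K) :
    volume (ball z r ∩ {x | baseWeight x < s}) ≤
      ENNReal.ofReal (K * √(s / baseWeightBound z r)) * volume (ball z r) := by
  set n := finrank ℝ E
  set M := baseWeightBound z r
  have hM₀ : 0 < M := zero_lt_one.trans_le (one_le_baseWeightBound z r)
  have hwidth : √(2 * (s + r)) * min (2 * r) (2 * s) ≤ 4 * √s * r := by
    rw [← pow_le_pow_iff_left₀ (by positivity) (by positivity) two_ne_zero, mul_pow, mul_pow,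
      mul_pow, Real.sq_sqrt (by positivity), Real.sq_sqrt hs.le]
    set m := min (2 * r) (2 * s)
    have h₀ : 0 ≤ m := le_min (by positivity) (by positivity)
    have h₁ : m ^ 2 ≤ (2 * r) ^ 2 := pow_le_pow_left₀ h₀ (min_le_left _ _) 2
    have h₂ : m * m ≤ 2 * s * (2 * r) :=
      mul_le_mul (min_le_right _ _) (min_le_left _ _) h₀ (by positivity)
    nlinarith [mul_le_mul_of_nonneg_left h₁ hs.le, mul_le_mul_of_nonneg_left h₂ hr.le]
  have hsM : √s ≤ 5 * r * √(s / M) := by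
    rw [Real.sqrt_div hs.le, mul_div_assoc', le_div_iff₀ (Real.sqrt_pos.2 hM₀), mul_comm (√s)]
    gcongr
    rw [Real.sqrt_le_iff]
    exact ⟨by positivity, by nlinarith⟩
  refine volume_ball_inter_baseWeight_lt_le_of_sublevelShadow_le z hr.le (by positivity) le_rfl
    (volume_sublevelShadow_le_of_norm_le z hr hA s) ?_
  calc n * 3 ^ (n - 1) * √(2 * (s + r)) / r * min (2 * r) (2 * s)
      = n * 3 ^ (n - 1) * (√(2 * (s + r)) * min (2 * r) (2 * s)) / r := by ring
    _ ≤ n * 3 ^ (n - 1) * (4 * (5 * r * √(s / M)) * r) / r :=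
        div_le_div_of_nonneg_right
          (mul_le_mul_of_nonneg_left (hwidth.trans (by gcongr)) (by positivity)) hr.le
    _ = 10 * n * 3 ^ (n - 1) * √(s / M) * (2 * r) := by field_simp; ring
    _ ≤ K * √(s / M) * (2 * r) := by gcongr

theorem exists_volume_ball_inter_baseWeight_lt_le :
    ∃ K : ℝ, 0 ≤ K ∧ ∀ (z : E × ℝ) (r : ℝ), 0 < r → ∀ s : ℝ,
      volume (ball z r ∩ {x | baseWeight x < s}) ≤
        ENNReal.ofReal (K * √(s / baseWeightBound z r)) * volume (ball z r) := by
  set n := finrank ℝ E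
  have hn : (1 : ℝ) ≤ n := by exact_mod_cast finrank_pos
  refine ⟨10 * n * 7 ^ n, by positivity, fun z r hr s => ?_⟩
  rcases (ball z r ∩ {x | baseWeight x < s}).eq_empty_or_nonempty with hS | ⟨x₀, hx₀, hW₀⟩
  · simp [hS]
  have hs : 1 < s := (one_le_baseWeight x₀).trans_lt hW₀
  have h7 : (1 : ℝ) ≤ 7 ^ n := one_le_pow₀ (by norm_num)
  by_cases h8 : baseWeightBound z r ≤ 8 * s
  · exact volume_ball_inter_baseWeight_lt_le_of_le z (by linarith) h8 (by nlinarith)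
  push Not at h8
  have hA := norm_fst_lt_of_baseWeight_lt hx₀ hW₀
  have hMlt := baseWeightBound_lt_of_baseWeight_lt hx₀ hW₀
  have hA₀ := norm_nonneg z.1
  have hM7 : baseWeightBound z r ≤ 7 * r * (‖z.1‖ + r) := by nlinarith
  rcases le_or_gt ‖z.1‖ (2 * r) with h | h
  · refine volume_ball_inter_baseWeight_lt_le_of_norm_le z hr (by linarith) h (by nlinarith) ?_
    gcongr
    exact (pow_le_pow_left₀ (by norm_num) (by norm_num) _).trans
      (pow_le_pow_right₀ (by norm_num) (Nat.sub_le n 1))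
  · exact volume_ball_inter_baseWeight_lt_le_of_lt_norm z hr h hA hM7 (by nlinarith)

theorem exists_setAverage_baseWeight_rpow_neg_le :
    ∃ C : ℝ, 0 ≤ C ∧ ∀ (z : E × ℝ) (r : ℝ), 0 < r → ∀ q : ℝ, 0 ≤ q → q ≤ 1 / 4 →
      ⨍ x in ball z r, baseWeight x ^ (-q) ≤ C * baseWeightBound z r ^ (-q) := by
  obtain ⟨K, hK, hsub⟩ := exists_volume_ball_inter_baseWeight_lt_le (E := E)
  have h₄ : 1 < (2 : ℝ) ^ (1 / 4 : ℝ) := Real.one_lt_rpow one_lt_two (by norm_num)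
  refine ⟨K * 4 ^ (1 / 2 : ℝ) / (2 ^ (1 / 4 : ℝ) - 1), div_nonneg (by positivity) (by linarith),
    fun z r hr q hq hq₄ => ?_⟩
  have hB : volume (ball z r) ≠ ∞ := measure_ball_lt_top.ne
  have hB₀ : 0 < volume.real (ball z r) :=
    ENNReal.toReal_pos (measure_ball_pos volume z hr).ne' hB
  have hsub' : ∀ s, volume.real (ball z r ∩ {x | baseWeight x < s}) ≤
      K * (s / baseWeightBound z r) ^ (1 / 2 : ℝ) * volume.real (ball z r) := fun s => by
    rw [← Real.sqrt_eq_rpow, measureReal_def, measureReal_def,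
      ← ENNReal.toReal_ofReal (mul_nonneg hK (Real.sqrt_nonneg _)), ← ENNReal.toReal_mul]
    exact ENNReal.toReal_mono (ENNReal.mul_ne_top ENNReal.ofReal_ne_top hB) (hsub z r hr s)
  have hint := setIntegral_rpow_neg_le_of_sublevel_le measurableSet_ball hB
    continuous_baseWeight.measurable (fun x _ => one_le_baseWeight x)
    (fun x hx => baseWeight_le_baseWeightBound hx) hK hsub' hq (by linarith)
  rw [setAverage_eq, smul_eq_mul, inv_mul_le_iff₀ hB₀]
  calc ∫ x in ball z r, baseWeight x ^ (-q)
      ≤ K * 4 ^ (1 / 2 : ℝ) / (2 ^ (1 / 2 - q) - 1) * baseWeightBound z r ^ (-q) *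
          volume.real (ball z r) := hint
    _ ≤ K * 4 ^ (1 / 2 : ℝ) / (2 ^ (1 / 4 : ℝ) - 1) * baseWeightBound z r ^ (-q) *
          volume.real (ball z r) := by
        refine mul_le_mul_of_nonneg_right (mul_le_mul_of_nonneg_right ?_ (Real.rpow_nonneg
          (zero_le_one.trans (one_le_baseWeightBound z r)) _)) measureReal_nonneg
        refine div_le_div_of_nonneg_left (by positivity) (sub_pos.2 h₄) (sub_le_sub_right ?_ 1)
        exact Real.rpow_le_rpow_of_exponent_le one_le_two (by linarith : (1 / 4 : ℝ) ≤ 1 / 2 - q)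
    _ = _ := by ring

end Sublevel

theorem wW_rpow_eq (d : ℕ) (x : Pt d) (t : ℝ) : wW d x ^ t = baseWeight x ^ ((d : ℝ) * t) := by
  have hw : wW d x = baseWeight x ^ (d : ℝ) := by
    rw [wW, baseWeight, Real.rpow_max zero_le_one (by positivity) (Nat.cast_nonneg d),
      Real.rpow_max (norm_nonneg _) (abs_nonneg _) (Nat.cast_nonneg d), Real.one_rpow,
      Real.rpow_natCast, Real.rpow_natCast]
  rw [hw, ← Real.rpow_mul (zero_le_one.trans (one_le_baseWeight x))]

/-- Let `d ≥ 2` and `P > 1`. There is `δ > 0` such that `w^t ∈ A_p(ℝ^d)` for all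
`|t| ≤ δ` and all `p ∈ [P, ∞)`. -/
theorem wW_rpow_memAp (d : ℕ) (hd : 2 ≤ d) (P : ℝ) (hP : 1 < P) :
    ∃ δ : ℝ, 0 < δ ∧ ∀ t p : ℝ, |t| ≤ δ → P ≤ p →
      MemAp (d := d) p (fun x => (wW d x) ^ t) := by
  have : NeZero (d - 1) := ⟨by omega⟩
  obtain ⟨C, hC, hneg⟩ :=
    exists_setAverage_baseWeight_rpow_neg_le (E := EuclideanSpace ℝ (Fin (d - 1)))
  have hd₀ : (0 : ℝ) < d := by exact_mod_cast (by omega : 0 < d)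
  have hm : 0 < min 1 (P - 1) := lt_min one_pos (by linarith)
  refine ⟨min 1 (P - 1) / (4 * d), by positivity, fun t p ht hp => ?_⟩
  have ha : |(d : ℝ) * t| ≤ min 1 (P - 1) / 4 := by
    rw [abs_mul, abs_of_pos hd₀]
    calc (d : ℝ) * |t| ≤ d * (min 1 (P - 1) / (4 * d)) := by gcongr
      _ = min 1 (P - 1) / 4 := by field_simp
  simp only [wW_rpow_eq]
  refine ⟨(continuous_baseWeight_rpow _).locallyIntegrable, max (C ^ (p - 1)) C, fun z r hr => ?_⟩
  exact setAverage_rpow_mul_setAverage_rpow_le (fun x => zero_le_one.trans (one_le_baseWeight x))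
    (zero_lt_one.trans_le (one_le_baseWeightBound z r)) hC
    (fun s hs => setAverage_baseWeight_rpow_le z hr hs) (hneg z r hr) (hP.trans_le hp)
    (ha.trans (by linarith [min_le_left 1 (P - 1)]))
    (ha.trans (by linarith [min_le_right 1 (P - 1)]))
end
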